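/- Under the same setting, if x ∈ [n]_A and d_B ∈ [n]_B are both (ε,δ)-good, then the L¹ distance between their weighted edge-density vectors is at least -(1-δ) + τ(q₀ - q₁ - 2ε) - k/(nδ) - (1-τ). -/

import Mathlib

/-!
Split each class `Cᵢ` into its majority `Cᵢ*` and the rest. On `Cᵢ*` the goodness of `x` and
`d_B` forces the two rows of `Gd` to differ by at least `c = q₀ - q₁ - 2ε` on average, because
`Cᵢ*` lies in one block and the two vertices lie in different blocks. Passing from `Gd` to `G`
costs at most one diagonal entry, as `x` and `d_B` cannot both lie in `Cᵢ*`, and the rest costs at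
most `|Cᵢ| - |Cᵢ*|`. Summing over the classes, with `∑ |Cᵢ*| ≥ τn` and `∑ |Cᵢ| ≤ n`, gives
`n · L¹ ≥ (c + 1)τn - n - k`; the claimed bound is weaker, as `δ ≤ 1`.
-/

open Finset

/-- Edge density of a vertex `x` with respect to a vertex set `S`. -/
noncomputable def eDen {n : ℕ} (M : Fin n → Fin n → ℝ) (x : Fin n)
    (S : Finset (Fin n)) : ℝ := (∑ j ∈ S, M x j) / S.card

lemma abs_sub_le_one_of_zero_or_one {a b : ℝ} (ha : a = 0 ∨ a = 1) (hb : b = 0 ∨ b = 1) :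
    |a - b| ≤ 1 := by
  rcases ha with rfl | rfl <;> rcases hb with rfl | rfl <;> norm_num

lemma sub_sub_two_mul_le_abs_sub {a b p q ε : ℝ} (ha : |a - p| < ε) (hb : |b - q| < ε) :
    p - q - 2 * ε ≤ |a - b| := by
  have := abs_lt.mp ha
  have := abs_lt.mp hb
  exact le_trans (by linarith) (le_abs_self _)

section RowSums

variable {V : Type*} {G Gd : V → V → ℝ}

lemma abs_sum_row_sub_le_card (hG : ∀ i j, G i j = 0 ∨ G i j = 1) (x y : V) (T : Finset V) :
    |∑ j ∈ T, (G x j - G y j)| ≤ #T :=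
  calc |∑ j ∈ T, (G x j - G y j)|
      ≤ ∑ j ∈ T, |G x j - G y j| := abs_sum_le_sum_abs _ _
    _ ≤ ∑ _j ∈ T, (1 : ℝ) :=
      sum_le_sum fun j _ => abs_sub_le_one_of_zero_or_one (hG x j) (hG y j)
    _ = #T := by simp

variable [DecidableEq V]

lemma sum_row_sub_eq_ite (hoff : ∀ i j, i ≠ j → Gd i j = G i j) (x : V) (S : Finset V) :
    ∑ j ∈ S, (G x j - Gd x j) = if x ∈ S then G x x - Gd x x else 0 := by
  rw [← sum_ite_eq S x fun j => G x j - Gd x j]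
  refine sum_congr rfl fun j _ => ?_
  split_ifs with h
  · rfl
  · rw [hoff x j h, sub_self]

lemma abs_sum_row_sub_sub_sum_row_sub_le_one (hG : ∀ i j, G i j = 0 ∨ G i j = 1)
    (hGd : ∀ i j, Gd i j = 0 ∨ Gd i j = 1) (hoff : ∀ i j, i ≠ j → Gd i j = G i j)
    {x y : V} {S : Finset V} (hxy : x ∉ S ∨ y ∉ S) :
    |∑ j ∈ S, (G x j - G y j) - ∑ j ∈ S, (Gd x j - Gd y j)| ≤ 1 := by
  have hrows : ∑ j ∈ S, (G x j - G y j) - ∑ j ∈ S, (Gd x j - Gd y j)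
      = ∑ j ∈ S, (G x j - Gd x j) - ∑ j ∈ S, (G y j - Gd y j) := by
    simp only [sum_sub_distrib]
    ring
  rw [hrows, sum_row_sub_eq_ite hoff, sum_row_sub_eq_ite hoff]
  rcases hxy with hx | hy
  · rw [if_neg hx, zero_sub, abs_neg]
    split_ifs
    · exact abs_sub_le_one_of_zero_or_one (hG y y) (hGd y y)
    · simp
  · rw [if_neg hy, sub_zero]
    split_ifs
    · exact abs_sub_le_one_of_zero_or_one (hG x x) (hGd x x)
    · simp

end RowSums

lemma eDen_mul_card {n : ℕ} (M : Fin n → Fin n → ℝ) (x : Fin n) (S : Finset (Fin n)) :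
    eDen M x S * #S = ∑ j ∈ S, M x j :=
  div_mul_cancel_of_imp fun h => by simp [card_eq_zero.mp (Nat.cast_eq_zero.mp h)]

lemma card_mul_abs_eDen_sub {n : ℕ} (M : Fin n → Fin n → ℝ) (x y : Fin n)
    (S : Finset (Fin n)) :
    #S * |eDen M x S - eDen M y S| = |∑ j ∈ S, (M x j - M y j)| := by
  rw [sum_sub_distrib, ← eDen_mul_card, ← eDen_mul_card, ← sub_mul, abs_mul, Nat.abs_cast,
    mul_comm]

lemma sum_card_mul_abs_eDen_sub_div {n k : ℕ} (M : Fin n → Fin n → ℝ) (x y : Fin n)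
    (C : Fin k → Finset (Fin n)) :
    ∑ i, ((#(C i) : ℝ) / n) * |eDen M x (C i) - eDen M y (C i)|
      = (∑ i, |∑ j ∈ C i, (M x j - M y j)|) / n := by
  rw [sum_div]
  refine sum_congr rfl fun i _ => ?_
  rw [div_mul_eq_mul_div, card_mul_abs_eDen_sub]

lemma le_abs_sum_row_sub_of_le_abs_eDen_sub {n : ℕ} {G Gd : Fin n → Fin n → ℝ}
    (hG : ∀ i j, G i j = 0 ∨ G i j = 1) (hGd : ∀ i j, Gd i j = 0 ∨ Gd i j = 1)
    (hoff : ∀ i j, i ≠ j → Gd i j = G i j) {x y : Fin n} {S C : Finset (Fin n)} (hSC : S ⊆ C)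
    (hxy : x ∉ S ∨ y ∉ S) {c : ℝ} (hc : c ≤ |eDen Gd x S - eDen Gd y S|) :
    (c + 1) * #S - #C - 1 ≤ |∑ j ∈ C, (G x j - G y j)| := by
  set A := ∑ j ∈ C \ S, (G x j - G y j)
  set B := ∑ j ∈ S, (G x j - G y j)
  set D := ∑ j ∈ S, (Gd x j - Gd y j)
  have hmajority : c * #S ≤ |D| := by
    rw [← card_mul_abs_eDen_sub, mul_comm]
    exact mul_le_mul_of_nonneg_left hc (Nat.cast_nonneg _)
  have hdiag : |B - D| ≤ 1 := abs_sum_row_sub_sub_sum_row_sub_le_one hG hGd hoff hxy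
  have hrest : |A| ≤ #C - #S := by
    rw [← Nat.cast_sub (card_le_card hSC), ← card_sdiff_of_subset hSC]
    exact abs_sum_row_sub_le_card hG x y (C \ S)
  have hB : |D| ≤ |B - D| + |B| := by simpa [abs_sub_comm D B] using abs_sub_abs_le_abs_sub D B
  have hAB : |B| ≤ |A + B| + |A| := by simpa using abs_sub (A + B) A
  rw [← sum_sdiff hSC]
  linarith

lemma sum_card_le_card_of_pairwise_disjoint {ι V : Type*} [Fintype ι] [Fintype V]
    [DecidableEq V] {C : ι → Finset V} (h : Pairwise (Function.onFun Disjoint C)) :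
    ∑ i, #(C i) ≤ Fintype.card V := by
  rw [← card_biUnion fun _ _ _ _ hij => h hij]
  exact card_le_univ _

theorem stmt_11_general (n k : ℕ) (hn : 0 < n)
    (G Gd : Fin n → Fin n → ℝ)
    (hG01 : ∀ i j, G i j = 0 ∨ G i j = 1) (hGd01 : ∀ i j, Gd i j = 0 ∨ Gd i j = 1)
    (hdiag : ∀ i j, i ≠ j → Gd i j = G i j)
    (A : Finset (Fin n))
    (q0 q1 τ δ ε : ℝ)
    (hτ : 0 < τ ∧ τ ≤ 1) (hδ : 0 < δ ∧ δ ≤ 1)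
    (C Cstar : Fin k → Finset (Fin n))
    (hsub : ∀ i, Cstar i ⊆ C i)
    (hdisj : Pairwise (Function.onFun Disjoint C))
    -- the majority of each class lies entirely in one block
    (hmaj : ∀ i, Cstar i ⊆ A ∨ Cstar i ⊆ Aᶜ)
    -- at least τn vertices are correctly classified
    (hcorrect : τ * n ≤ ∑ i, ((Cstar i).card : ℝ))
    (x dB : Fin n) (hx : x ∈ A) (hdB : dB ∈ Aᶜ)
    -- x and dA are (ε,δ)-good: densities (in the augmented graph Gd) to each
    -- majority set are within ε of the expected value
    (hxgood : ∀ i, (Cstar i ⊆ A → |eDen Gd x (Cstar i) - q0| < ε) ∧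
        (Cstar i ⊆ Aᶜ → |eDen Gd x (Cstar i) - q1| < ε))
    (hdBgood : ∀ i, (Cstar i ⊆ A → |eDen Gd dB (Cstar i) - q1| < ε) ∧
        (Cstar i ⊆ Aᶜ → |eDen Gd dB (Cstar i) - q0| < ε)) :
    ∑ i, (((C i).card : ℝ) / n) * |eDen G x (C i) - eDen G dB (C i)|
      ≥ -(1 - δ) + τ * (q0 - q1 - 2 * ε) - k / (n * δ) - (1 - τ) := by
  obtain ⟨hτ0, -⟩ := hτ
  obtain ⟨hδ0, hδ1⟩ := hδ
  set c := q0 - q1 - 2 * ε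
  have hclass (i : Fin k) :
      (c + 1) * #(Cstar i) - #(C i) - 1 ≤ |∑ j ∈ C i, (G x j - G dB j)| := by
    refine le_abs_sum_row_sub_of_le_abs_eDen_sub hG01 hGd01 hdiag (hsub i) ?_ ?_ <;>
      rcases hmaj i with hA | hAc
    · exact .inr fun h => mem_compl.mp hdB (hA h)
    · exact .inl fun h => mem_compl.mp (hAc h) hx
    · exact sub_sub_two_mul_le_abs_sub ((hxgood i).1 hA) ((hdBgood i).1 hA)
    · rw [abs_sub_comm]
      exact sub_sub_two_mul_le_abs_sub ((hdBgood i).2 hAc) ((hxgood i).2 hAc)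
  have hsum : (c + 1) * ∑ i, (#(Cstar i) : ℝ) - ∑ i, (#(C i) : ℝ) - k
      ≤ ∑ i, |∑ j ∈ C i, (G x j - G dB j)| := by
    simpa only [sum_sub_distrib, ← mul_sum, sum_const, card_univ, Fintype.card_fin, nsmul_eq_mul,
      mul_one] using sum_le_sum (s := univ) fun i _ => hclass i
  have hcard_le : ∑ i, (#(C i) : ℝ) ≤ n := by
    exact_mod_cast (sum_card_le_card_of_pairwise_disjoint hdisj).trans (Fintype.card_fin n).le
  have hn' : (0 : ℝ) < n := by exact_mod_cast hn
  have hkδ : (k : ℝ) / n ≤ k / (n * δ) :=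
    div_le_div_of_nonneg_left k.cast_nonneg (mul_pos hn' hδ0) (mul_le_of_le_one_right hn'.le hδ1)
  rw [sum_card_mul_abs_eDen_sub_div, ge_iff_le]
  have hL : 0 ≤ (∑ i, |∑ j ∈ C i, (G x j - G dB j)|) / n := by positivity
  rcases le_or_gt (c + 1) 0 with hc | hc
  · have : 0 ≤ (k : ℝ) / (n * δ) := by positivity
    nlinarith
  · calc _ ≤ (c + 1) * τ - 1 - k / n := by linarith
      _ = ((c + 1) * (τ * n) - n - k) / n := by field_simp
      _ ≤ _ := by gcongr; linarith [mul_le_mul_of_nonneg_left hcorrect hc.le]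

/-- Cross-block bound: if `x ∈ A` and `d_B ∈ B` are both (ε,δ)-good vertices,
the L¹ distance between their weighted edge-density vectors is at least
-(1-δ) + τ(q₀ - q₁ - 2ε) - k/(nδ) - (1-τ). -/
theorem stmt_11 (n k : ℕ) (hn : 0 < n) (hk : 0 < k)
    (G Gd : Fin n → Fin n → ℝ)
    (hG01 : ∀ i j, G i j = 0 ∨ G i j = 1) (hGd01 : ∀ i j, Gd i j = 0 ∨ Gd i j = 1)
    (hdiag : ∀ i j, i ≠ j → Gd i j = G i j)
    (A : Finset (Fin n))
    (q0 q1 τ δ ε : ℝ)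
    (hq : 0 ≤ q1 ∧ q1 < q0 ∧ q0 ≤ 1)
    (hτ : 0 < τ ∧ τ ≤ 1) (hδ : 0 < δ ∧ δ ≤ 1) (hε : 0 < ε)
    (C Cstar : Fin k → Finset (Fin n))
    (hsub : ∀ i, Cstar i ⊆ C i)
    (hdisj : Pairwise (Function.onFun Disjoint C))
    (hcover : ∀ v : Fin n, ∃ i, v ∈ C i)
    -- every class is δ-large and δ-good
    (hlarge : ∀ i, δ * n / k ≤ ((C i).card : ℝ))
    (hgood : ∀ i, δ * (C i).card ≤ ((Cstar i).card : ℝ))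
    -- the majority of each class lies entirely in one block
    (hmaj : ∀ i, Cstar i ⊆ A ∨ Cstar i ⊆ Aᶜ)
    -- at least τn vertices are correctly classified
    (hcorrect : τ * n ≤ ∑ i, ((Cstar i).card : ℝ))
    (x dB : Fin n) (hx : x ∈ A) (hdB : dB ∈ Aᶜ)
    -- x and dA are (ε,δ)-good: densities (in the augmented graph Gd) to each
    -- majority set are within ε of the expected value
    (hxgood : ∀ i, (Cstar i ⊆ A → |eDen Gd x (Cstar i) - q0| < ε) ∧
        (Cstar i ⊆ Aᶜ → |eDen Gd x (Cstar i) - q1| < ε))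
    (hdBgood : ∀ i, (Cstar i ⊆ A → |eDen Gd dB (Cstar i) - q1| < ε) ∧
        (Cstar i ⊆ Aᶜ → |eDen Gd dB (Cstar i) - q0| < ε)) :
    ∑ i, (((C i).card : ℝ) / n) * |eDen G x (C i) - eDen G dB (C i)|
      ≥ -(1 - δ) + τ * (q0 - q1 - 2 * ε) - k / (n * δ) - (1 - τ) :=
  stmt_11_general n k hn G Gd hG01 hGd01 hdiag A q0 q1 τ δ ε hτ hδ C Cstar hsub hdisj hmaj hcorrect
    x dB hx hdB hxgood hdBgood
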